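/- arXiv:2202.12003 — 3 statements merged into one kernel-verified Lean document; each statement's English description precedes it below -/
import Mathlib

section
/- Let T be a clique tree satisfying the running intersection property and let v be a variable in T. If v is retained only on the cliques of a connected subtree ST_r of the subtree of cliques containing v, and removed from all other cliques and the corresponding sepsets, then the resulting clique tree satisfies the running intersection property. -/
/-- The running intersection property. -/
def RIP {N X : Type} (G : SimpleGraph N) (Cl : N → Finset X) : Prop :=
  ∀ (x : X) (i j : N), x ∈ Cl i → x ∈ Cl j →
    ∀ p : G.Walk i j, p.IsPath → ∀ n ∈ p.support, x ∈ Cl n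

/-- If a variable `v` is retained only on the cliques of a connected subtree `R` of
the subtree of cliques containing `v`, and removed from all other cliques (and the
corresponding sepsets), the resulting clique tree satisfies RIP. -/
theorem stmt_4 {N X : Type} [DecidableEq N] [DecidableEq X]
    (G : SimpleGraph N) (hT : G.IsTree) (Cl : N → Finset X) (hRIP : RIP G Cl)
    (v : X) (R : Finset N)
    (hRv : ∀ n ∈ R, v ∈ Cl n)
    (hRconn : ∀ a ∈ R, ∀ b ∈ R, ∀ p : G.Walk a b, p.IsPath → ∀ n ∈ p.support, n ∈ R) :
    RIP G (fun n => if n ∈ R then Cl n else (Cl n).erase v) := by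
  intro x i j hi hj p hp n hn
  simp only at hi hj ⊢
  by_cases hxv : x = v
  · subst hxv
    have hiR : i ∈ R := by
      by_contra h; simp [h] at hi
    have hjR : j ∈ R := by
      by_contra h; simp [h] at hj
    have hnR := hRconn i hiR j hjR p hp n hn
    simp [hnR]; exact hRv n hnR
  · have hi' : x ∈ Cl i := by
      by_cases h : i ∈ R
      · simpa [h] using hi
      · simp [h] at hi; exact hi.2
    have hj' : x ∈ Cl j := by
      by_cases h : j ∈ R
      · simpa [h] using hj
      · simp [h] at hj; exact hj.2
    have := hRIP x i j hi' hj' p hp n hn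
    by_cases h : n ∈ R <;> simp [h, hxv, this]
end

section
/- In a calibrated clique tree, if a variable x belongs to two cliques C_i and C_j, then the singleton marginal of x computed from β(C_i) equals the singleton marginal of x computed from β(C_j). -/
/-- Marginal of a belief `f` over clique `C` onto a subset `S ⊆ C`: sum over the
states of the variables of `C∖S`, the variables outside `C` being held fixed. -/
noncomputable def margTo {ι : Type} [Fintype ι] [DecidableEq ι] (D : ι → Type)
    [∀ i, Fintype (D i)] [∀ i, DecidableEq (D i)]
    (C S : Finset ι) (f : (∀ i, D i) → ℝ) (σ : ∀ i, D i) : ℝ :=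
  ∑ τ : ∀ i, D i,
    if (∀ i ∈ S, τ i = σ i) ∧ (∀ i, i ∉ C → τ i = σ i) then f τ else 0

lemma margTo_comp {ι : Type} [Fintype ι] [DecidableEq ι] (D : ι → Type)
    [∀ i, Fintype (D i)] [∀ i, DecidableEq (D i)]
    (C T S : Finset ι) (hST : S ⊆ T) (hTC : T ⊆ C) (f : (∀ i, D i) → ℝ) (σ : ∀ i, D i) :
    margTo D C S f σ = margTo D T S (fun τ => margTo D C T f τ) σ := by
  unfold margTo
  refine Eq.symm ?_
  calc
    ∑ τ : ∀ i, D i,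
        (if (∀ i ∈ S, τ i = σ i) ∧ (∀ i, i ∉ T → τ i = σ i) then
          ∑ ρ : ∀ i, D i,
            if (∀ i ∈ T, ρ i = τ i) ∧ (∀ i, i ∉ C → ρ i = τ i) then f ρ else 0
        else 0)
      = ∑ τ : ∀ i, D i, ∑ ρ : ∀ i, D i,
          if ((∀ i ∈ S, τ i = σ i) ∧ (∀ i, i ∉ T → τ i = σ i)) ∧
             ((∀ i ∈ T, ρ i = τ i) ∧ (∀ i, i ∉ C → ρ i = τ i)) then f ρ else 0 := by
        refine Finset.sum_congr rfl (fun τ _ => ?_)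
        by_cases h : (∀ i ∈ S, τ i = σ i) ∧ (∀ i, i ∉ T → τ i = σ i)
        · rw [if_pos h]
          refine Finset.sum_congr rfl (fun ρ _ => ?_)
          by_cases hq : (∀ i ∈ T, ρ i = τ i) ∧ (∀ i, i ∉ C → ρ i = τ i)
          · rw [if_pos hq, if_pos ⟨h, hq⟩]
          · rw [if_neg hq, if_neg (fun hc => hq hc.2)]
        · rw [if_neg h]
          exact (Finset.sum_eq_zero (fun ρ _ => if_neg (fun hc => h hc.1))).symm
    _ = ∑ ρ : ∀ i, D i, ∑ τ : ∀ i, D i,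
          if ((∀ i ∈ S, τ i = σ i) ∧ (∀ i, i ∉ T → τ i = σ i)) ∧
             ((∀ i ∈ T, ρ i = τ i) ∧ (∀ i, i ∉ C → ρ i = τ i)) then f ρ else 0 :=
        Finset.sum_comm
    _ = ∑ ρ : ∀ i, D i,
          if (∀ i ∈ S, ρ i = σ i) ∧ (∀ i, i ∉ C → ρ i = σ i) then f ρ else 0 := by
        refine Finset.sum_congr rfl (fun ρ _ => ?_)
        by_cases hR : (∀ i ∈ S, ρ i = σ i) ∧ (∀ i, i ∉ C → ρ i = σ i)
        · rw [if_pos hR]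
          set τ₀ : ∀ i, D i := fun i => if i ∈ T then ρ i else σ i with hτ₀
          have key : ∀ τ : ∀ i, D i,
              (((∀ i ∈ S, τ i = σ i) ∧ (∀ i, i ∉ T → τ i = σ i)) ∧
                ((∀ i ∈ T, ρ i = τ i) ∧ (∀ i, i ∉ C → ρ i = τ i))) → τ = τ₀ := by
            intro τ ⟨hP, hQ⟩
            funext i
            by_cases hiT : i ∈ T
            · rw [hτ₀]; simp only [hiT, if_pos]; exact (hQ.1 i hiT).symm
            · rw [hτ₀]; simp only [hiT, if_neg, if_false]; exact hP.2 i hiT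
          rw [Finset.sum_eq_single τ₀
            (fun τ _ hne => by
              rw [if_neg]; intro h; exact hne (key τ h))
            (fun h => absurd (Finset.mem_univ _) h)]
          rw [if_pos]
          constructor
          · constructor
            · intro i hi
              rw [hτ₀]; simp only [hST hi, if_pos]
              exact hR.1 i hi
            · intro i hi
              rw [hτ₀]; simp only [hi, if_neg, if_false]
          · constructor
            · intro i hi
              rw [hτ₀]; simp only [hi, if_pos]
            · intro i hi
              rw [hτ₀]
              have : i ∉ T := fun h => hi (hTC h)
              simp only [this, if_neg, if_false]
              exact hR.2 i hi
        · rw [if_neg hR]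
          refine Finset.sum_eq_zero (fun τ _ => ?_)
          rw [if_neg]
          rintro ⟨hP, hQ⟩
          refine hR ⟨fun i hi => ?_, fun i hi => ?_⟩
          · rw [hQ.1 i (hST hi)]; exact hP.1 i hi
          · rw [hQ.2 i hi]; exact hP.2 i (fun h => hi (hTC h))

section
variable {N ι : Type} [Fintype ι] [DecidableEq ι]
    (D : ι → Type) [∀ i, Fintype (D i)] [∀ i, DecidableEq (D i)]
    (G : SimpleGraph N) (Cl : N → Finset ι) (β : N → (∀ i, D i) → ℝ)

lemma margTo_adj
    (hcal : ∀ n m, G.Adj n m → ∀ σ,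
      margTo D (Cl n) (Cl n ∩ Cl m) (β n) σ = margTo D (Cl m) (Cl n ∩ Cl m) (β m) σ)
    (x : ι) (n m : N) (hadj : G.Adj n m) (hxn : x ∈ Cl n) (hxm : x ∈ Cl m)
    (σ : ∀ i, D i) :
    margTo D (Cl n) {x} (β n) σ = margTo D (Cl m) {x} (β m) σ := by
  have hS : ({x} : Finset ι) ⊆ Cl n ∩ Cl m := by
    simp [Finset.singleton_subset_iff, hxn, hxm]
  rw [margTo_comp D (Cl n) (Cl n ∩ Cl m) {x} hS Finset.inter_subset_left (β n) σ,
      margTo_comp D (Cl m) (Cl n ∩ Cl m) {x} hS Finset.inter_subset_right (β m) σ]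
  have : (fun τ => margTo D (Cl n) (Cl n ∩ Cl m) (β n) τ)
       = fun τ => margTo D (Cl m) (Cl n ∩ Cl m) (β m) τ := funext (hcal n m hadj)
  rw [this]

lemma margTo_walk
    (hcal : ∀ n m, G.Adj n m → ∀ σ,
      margTo D (Cl n) (Cl n ∩ Cl m) (β n) σ = margTo D (Cl m) (Cl n ∩ Cl m) (β m) σ)
    (x : ι) :
    ∀ (a b : N) (p : G.Walk a b), (∀ n ∈ p.support, x ∈ Cl n) →
      ∀ σ, margTo D (Cl a) {x} (β a) σ = margTo D (Cl b) {x} (β b) σ := by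
  intro a b p
  induction p with
  | nil => intro _ σ; rfl
  | cons h p ih =>
    intro hx σ
    rename_i u v w
    have hxu : x ∈ Cl u := hx u (by simp)
    have hxv : x ∈ Cl v := hx v (by simp [SimpleGraph.Walk.support_cons])
    rw [margTo_adj D G Cl β hcal x u v h hxu hxv σ]
    exact ih (fun n hn => hx n (by simp [SimpleGraph.Walk.support_cons, hn])) σ

end

/-- In a calibrated clique tree, the singleton marginal of a variable `x` is the same
whether computed from the belief of clique `C_i` or of clique `C_j`. -/
theorem stmt_10 {N ι : Type} [Fintype ι] [DecidableEq ι]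
    (D : ι → Type) [∀ i, Fintype (D i)] [∀ i, DecidableEq (D i)]
    (G : SimpleGraph N) (hT : G.IsTree)
    (Cl : N → Finset ι) (β : N → (∀ i, D i) → ℝ)
    (hdep : ∀ n (σ τ : ∀ i, D i), (∀ i ∈ Cl n, σ i = τ i) → β n σ = β n τ)
    (hRIP : RIP G Cl)
    (hcal : ∀ n m, G.Adj n m → ∀ σ,
      margTo D (Cl n) (Cl n ∩ Cl m) (β n) σ = margTo D (Cl m) (Cl n ∩ Cl m) (β m) σ)
    (x : ι) (ni nj : N) (hxi : x ∈ Cl ni) (hxj : x ∈ Cl nj) :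
    ∀ σ, margTo D (Cl ni) {x} (β ni) σ = margTo D (Cl nj) {x} (β nj) σ := by
  classical
  obtain ⟨w⟩ := hT.isConnected.preconnected ni nj
  have hp := w.toPath.2
  have hx : ∀ n ∈ (w.toPath : G.Walk ni nj).support, x ∈ Cl n :=
    hRIP x ni nj hxi hxj w.toPath hp
  exact margTo_walk D G Cl β hcal x ni nj w.toPath hx
end

section
/- Let T be a clique tree satisfying RIP over variables X, and let V ⊆ X. Let G be the minimal connected subtree of T spanning all cliques that contain a variable of V, and recursively delete degree-1 cliques of G whose intersection with V is contained in their neighbor's intersection with V. Then the resulting subgraph MSG[V] is a connected subtree, and every variable of V appearing in T appears in some clique of MSG[V]. -/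
/-- One pruning step: delete from `M` a degree-1 node `n` (having a unique neighbor
`m` in `M`) whose intersection with the variable set `Vf` is contained in that of its
neighbor. -/
def PruneStep {N X : Type} [DecidableEq X] (G : SimpleGraph N) (Cl : N → Finset X)
    (Vf : Finset X) (M M' : Set N) : Prop :=
  ∃ n m : N, n ∈ M ∧ m ∈ M ∧ G.Adj n m ∧
    (∀ m' ∈ M, G.Adj n m' → m' = m) ∧
    (Cl n ∩ Vf) ⊆ (Cl m ∩ Vf) ∧
    M' = M \ {n}

/-- In a tree, the (unique) path from `a` to `b` is covered by paths `a → z` and `z → b`. -/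
lemma tree_tri {N : Type} [DecidableEq N] {G : SimpleGraph N} (hT : G.IsTree) {a z b : N}
    (p : G.Walk a b) (hp : p.IsPath) (q : G.Walk a z) (hq : q.IsPath)
    (r : G.Walk z b) (hr : r.IsPath) :
    ∀ n ∈ p.support, n ∈ q.support ∨ n ∈ r.support := by
  intro n hn
  have huniq := (hT.existsUnique_path a b).unique hp ((q.append r).bypass_isPath)
  rw [huniq] at hn
  have h2 := (q.append r).support_bypass_subset hn
  rwa [SimpleGraph.Walk.mem_support_append_iff] at h2

/-- An interior vertex of a path has two distinct neighbors on the path. -/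
lemma interior_two_nbrs {N : Type} [DecidableEq N] {G : SimpleGraph N} {a b n : N}
    (p : G.Walk a b) (hp : p.IsPath) (hn : n ∈ p.support) (hna : n ≠ a) (hnb : n ≠ b) :
    ∃ u v : N, u ≠ v ∧ G.Adj n u ∧ G.Adj n v ∧ u ∈ p.support ∧ v ∈ p.support := by
  have hqrev : ¬ (p.takeUntil n hn).reverse.Nil := SimpleGraph.Walk.not_nil_of_ne hna
  have hrnil : ¬ (p.dropUntil n hn).Nil := SimpleGraph.Walk.not_nil_of_ne hnb
  obtain ⟨u, hadju, qrest, hqeq⟩ := SimpleGraph.Walk.not_nil_iff.mp hqrev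
  obtain ⟨v, hadjv, rrest, hreq⟩ := SimpleGraph.Walk.not_nil_iff.mp hrnil
  have hnodup : ((p.takeUntil n hn).support ++ (p.dropUntil n hn).support.tail).Nodup := by
    have h := hp.support_nodup
    rw [← p.take_spec hn, SimpleGraph.Walk.support_append] at h
    exact h
  have hu : u ∈ (p.takeUntil n hn).support := by
    have h : u ∈ (p.takeUntil n hn).reverse.support := by
      rw [hqeq, SimpleGraph.Walk.support_cons]
      exact List.mem_cons_of_mem _ qrest.start_mem_support
    simpa using h
  have hv : v ∈ (p.dropUntil n hn).support.tail := by
    rw [hreq, SimpleGraph.Walk.support_cons]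
    exact rrest.start_mem_support
  refine ⟨u, v, ?_, hadju, hadjv,
    SimpleGraph.Walk.support_takeUntil_subset p hn hu,
    SimpleGraph.Walk.support_dropUntil_subset p hn (List.mem_of_mem_tail hv)⟩
  intro huv
  exact (List.disjoint_of_nodup_append hnodup) hu (huv ▸ hv)

/-- Starting from the minimal connected subtree spanning all cliques containing a
variable of `Vf` and recursively pruning redundant degree-1 cliques, the resulting
set of cliques `M` (= `MSG[Vf]`) is a connected subtree (path-closed in the tree) and
every variable of `Vf` appearing in the clique tree appears in some clique of `M`. -/
theorem stmt_17 {N X : Type} [DecidableEq X]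
    (G : SimpleGraph N) (hT : G.IsTree)
    (Cl : N → Finset X) (hRIP : RIP G Cl) (Vf : Finset X)
    (M : Set N)
    (hM : Relation.ReflTransGen (PruneStep G Cl Vf)
      {n : N | ∃ a b : N, (Cl a ∩ Vf).Nonempty ∧ (Cl b ∩ Vf).Nonempty ∧
        ∃ p : G.Walk a b, p.IsPath ∧ n ∈ p.support} M) :
    (∀ a ∈ M, ∀ b ∈ M, ∀ p : G.Walk a b, p.IsPath → ∀ n ∈ p.support, n ∈ M) ∧
    (∀ x ∈ Vf, (∃ n : N, x ∈ Cl n) → ∃ n ∈ M, x ∈ Cl n) := by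
  classical
  induction hM with
  | refl =>
    constructor
    · rintro a ⟨a₁, b₁, h₁, h₂, p₁, hp₁, ha⟩ b ⟨a₂, b₂, h₃, h₄, p₂, hp₂, hb⟩ p hp n hn
      -- path a → a₂ and a₂ → b (= takeUntil of p₂)
      have hq1 : (p₁.takeUntil a ha).IsPath := hp₁.takeUntil ha
      have hr1 : (p₂.takeUntil b hb).IsPath := hp₂.takeUntil hb
      obtain ⟨w⟩ := hT.isConnected.preconnected a a₂
      have hcase1 := tree_tri hT p hp w.bypass w.bypass_isPath
        (p₂.takeUntil b hb) hr1 n hn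
      rcases hcase1 with h | h
      · -- n on path a → a₂; split at a₁ using path a → a₁ and a₁ → a₂
        obtain ⟨t⟩ := hT.isConnected.preconnected a₁ a₂
        have hcase2 := tree_tri hT w.bypass w.bypass_isPath
          (p₁.takeUntil a ha).reverse hq1.reverse t.bypass t.bypass_isPath n h
        rcases hcase2 with h' | h'
        · exact ⟨a₁, b₁, h₁, h₂, p₁, hp₁,
            SimpleGraph.Walk.support_takeUntil_subset p₁ ha (by simpa using h')⟩
        · exact ⟨a₁, a₂, h₁, h₃, t.bypass, t.bypass_isPath, h'⟩
      · exact ⟨a₂, b₂, h₃, h₄, p₂, hp₂,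
          SimpleGraph.Walk.support_takeUntil_subset p₂ hb h⟩
    · rintro x hx ⟨k, hk⟩
      exact ⟨k, ⟨k, k, ⟨x, Finset.mem_inter.mpr ⟨hk, hx⟩⟩,
        ⟨x, Finset.mem_inter.mpr ⟨hk, hx⟩⟩,
        SimpleGraph.Walk.nil, SimpleGraph.Walk.IsPath.nil, by simp⟩, hk⟩
  | tail hsteps hstep ih =>
    obtain ⟨n, m, hnM, hmM, hadj, huniq, hsub, hM'⟩ := hstep
    obtain ⟨ihclose, ihcov⟩ := ih
    subst hM'
    constructor
    · rintro a ⟨haM, hane⟩ b ⟨hbM, hbne⟩ p hp k hk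
      have hkM := ihclose a haM b hbM p hp k hk
      refine ⟨hkM, fun hkn => ?_⟩
      simp only [Set.mem_singleton_iff] at hkn hane hbne
      subst hkn
      obtain ⟨u, v, huv, hau, hav, hup, hvp⟩ :=
        interior_two_nbrs p hp hk (fun h => hane h.symm) (fun h => hbne h.symm)
      have huM := ihclose a haM b hbM p hp u hup
      have hvM := ihclose a haM b hbM p hp v hvp
      exact huv ((huniq u huM hau).trans (huniq v hvM hav).symm)
    · rintro x hx hex
      obtain ⟨k, hkM, hkx⟩ := ihcov x hx hex
      by_cases hkn : k = n
      · subst hkn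
        have : x ∈ Cl m ∩ Vf := hsub (Finset.mem_inter.mpr ⟨hkx, hx⟩)
        exact ⟨m, ⟨hmM, fun h => hadj.ne' (by simpa using h)⟩,
          (Finset.mem_inter.mp this).1⟩
      · exact ⟨k, ⟨hkM, hkn⟩, hkx⟩
end
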